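/- arXiv:2110.13227 — 3 statements merged into one kernel-verified Lean document; each statement's English description precedes it below -/
import Mathlib

section
/- If D is a direct product D = P₁^{a₁} × P₂^{a₂} × ⋯ × P_k^{a_k}, where P_j denotes a Sylow p-subgroup of the symmetric group on p^j letters (an iterated wreath product of j copies of the cyclic group C_p), and a_k ≥ 1, then the derived length of D equals k. -/
/-!
Derived length is invariant under isomorphism, and a direct product has `derivedSeries _ n = ⊥`
exactly when every factor does; so it suffices that a Sylow `p`-subgroup of `Sym(p^j)`, which is
the `j`-fold iterated wreath product of `C_p` (`Sylow.mulEquivIteratedWreathProduct`), has derived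
length exactly `j`. For `W = D ≀ C_p` the derived subgroup `W'` lies in the base group
`C_p → D`, since the top group is abelian, so `D^{(n)} = 1` gives `W^{(n+1)} = 1`. Conversely,
for `q ≠ 1` the commutator of `(δ₁ d, 1)` with `(1, q)` has coordinate `d` at `1`, so `W'` surjects
onto `D` and `W^{(n+1)} = 1` forces `D^{(n)} = 1`.
-/

open Subgroup
open scoped commutatorElement

/-- The derived length of a group: the least `n` with `derivedSeries G n = ⊥`. -/
noncomputable def derivedLength (G : Type*) [Group G] : ℕ :=
  sInf {n : ℕ | derivedSeries G n = ⊥}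

section DerivedSeries

variable {G H : Type*} [Group G] [Group H]

theorem derivedLength_eq_of_derivedSeries_eq_bot_iff {k : ℕ}
    (h : ∀ n, derivedSeries G n = ⊥ ↔ k ≤ n) : derivedLength G = k := by
  rw [derivedLength, show {n | derivedSeries G n = ⊥} = Set.Ici k from Set.ext h, csInf_Ici]

theorem derivedSeries_eq_bot_of_injective (f : G →* H) (hf : Function.Injective f) {n : ℕ}
    (h : derivedSeries H n = ⊥) : derivedSeries G n = ⊥ :=
  (map_eq_bot_iff_of_injective _ hf).mp <|
    le_bot_iff.mp <| h ▸ map_derivedSeries_le_derivedSeries f n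

theorem derivedSeries_eq_bot_of_surjective (f : G →* H) (hf : Function.Surjective f) {n : ℕ}
    (h : derivedSeries G n = ⊥) : derivedSeries H n = ⊥ := by
  rw [← map_derivedSeries_eq hf, h, Subgroup.map_bot]

theorem MulEquiv.derivedSeries_eq_bot_iff (e : G ≃* H) {n : ℕ} :
    derivedSeries G n = ⊥ ↔ derivedSeries H n = ⊥ :=
  ⟨derivedSeries_eq_bot_of_surjective e.toMonoidHom e.surjective,
    derivedSeries_eq_bot_of_injective e.toMonoidHom e.injective⟩

theorem derivedSeries_pi_eq_bot_iff {ι : Type*} {G : ι → Type*} [∀ i, Group (G i)] {n : ℕ} :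
    derivedSeries (∀ i, G i) n = ⊥ ↔ ∀ i, derivedSeries (G i) n = ⊥ := by
  classical
  refine ⟨fun h i =>
      derivedSeries_eq_bot_of_injective (MonoidHom.mulSingle G i) (Pi.mulSingle_injective i) h,
    fun h => (eq_bot_iff_forall _).mpr fun x hx => funext fun i => ?_⟩
  have hxi : x i ∈ derivedSeries (G i) n :=
    map_derivedSeries_le_derivedSeries (Pi.evalMonoidHom G i) n (mem_map_of_mem _ hx)
  rwa [h i] at hxi

theorem map_subtype_derivedSeries_commutator (n : ℕ) :
    (derivedSeries (commutator G) n).map (commutator G).subtype = derivedSeries G (n + 1) := by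
  induction n with
  | zero => rw [derivedSeries_zero, ← MonoidHom.range_eq_map, range_subtype, derivedSeries_one]
  | succ n ih => rw [derivedSeries_succ, map_commutator, ih, ← derivedSeries_succ]

theorem derivedSeries_succ_eq_bot_iff {n : ℕ} :
    derivedSeries G (n + 1) = ⊥ ↔ derivedSeries (commutator G) n = ⊥ := by
  rw [← map_subtype_derivedSeries_commutator, map_eq_bot_iff_of_injective _ (subtype_injective _)]

end DerivedSeries

namespace RegularWreathProduct

section

variable {D Q : Type*} [Group D] [Group Q]

instance [Nontrivial Q] : Nontrivial (D ≀ᵣ Q) :=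
  Function.Surjective.nontrivial (f := (rightHom : D ≀ᵣ Q →* Q)) fun q => ⟨inl q, rfl⟩

def kerRightHomLeft : (rightHom : D ≀ᵣ Q →* Q).ker →* (Q → D) where
  toFun x := (x : D ≀ᵣ Q).left
  map_one' := rfl
  map_mul' x y := by
    have hx : (x : D ≀ᵣ Q).right = 1 := x.2
    simp [hx]

theorem kerRightHomLeft_injective : Function.Injective (kerRightHomLeft (D := D) (Q := Q)) :=
  fun x y h => Subtype.ext <| RegularWreathProduct.ext h (x.2.trans y.2.symm)

end

variable {D Q : Type*} [Group D] [CommGroup Q]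

def commutatorLeft : commutator (D ≀ᵣ Q) →* (Q → D) :=
  kerRightHomLeft.comp (inclusion (Abelianization.commutator_subset_ker rightHom))

theorem commutatorLeft_injective : Function.Injective (commutatorLeft (D := D) (Q := Q)) :=
  kerRightHomLeft_injective.comp (inclusion_injective _)

theorem eval_one_comp_commutatorLeft_surjective [Nontrivial Q] :
    Function.Surjective ((Pi.evalMonoidHom (fun _ => D) 1).comp (commutatorLeft (Q := Q))) := by
  classical
  intro d
  obtain ⟨q, hq⟩ := exists_ne (1 : Q)
  refine ⟨⟨⁅(⟨Pi.mulSingle 1 d, 1⟩ : D ≀ᵣ Q), inl q⁆,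
    commutator_mem_commutator (mem_top _) (mem_top _)⟩, ?_⟩
  simp [commutatorLeft, kerRightHomLeft, commutatorElement_def, hq]

theorem derivedSeries_succ_eq_bot_iff [Nontrivial Q] {n : ℕ} :
    derivedSeries (D ≀ᵣ Q) (n + 1) = ⊥ ↔ derivedSeries D n = ⊥ := by
  rw [_root_.derivedSeries_succ_eq_bot_iff]
  exact ⟨derivedSeries_eq_bot_of_surjective _ eval_one_comp_commutatorLeft_surjective,
    fun h => derivedSeries_eq_bot_of_injective _ commutatorLeft_injective
      (derivedSeries_pi_eq_bot_iff.mpr fun _ => h)⟩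

end RegularWreathProduct

theorem IteratedWreathProduct.derivedSeries_eq_bot_iff (G : Type*) [CommGroup G] [Nontrivial G]
    (j n : ℕ) : derivedSeries (IteratedWreathProduct G j) n = ⊥ ↔ j ≤ n := by
  induction j generalizing n with
  | zero =>
    exact iff_of_true
      ((eq_bot_iff_forall _).mpr fun _ _ => Subsingleton.elim (α := PUnit) _ _) n.zero_le
  | succ j ih =>
    cases n with
    | zero =>
      have : Nontrivial (IteratedWreathProduct G (j + 1)) :=
        inferInstanceAs (Nontrivial (IteratedWreathProduct G j ≀ᵣ G))
      exact iff_of_false (by rw [derivedSeries_zero]; exact top_ne_bot) (by omega)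
    | succ n =>
      exact RegularWreathProduct.derivedSeries_succ_eq_bot_iff.trans
        ((ih n).trans Nat.succ_le_succ_iff.symm)

theorem Sylow.derivedSeries_perm_eq_bot_iff {p j : ℕ} [Fact p.Prime] {α : Type*} [Finite α]
    (hα : Nat.card α = p ^ j) (P : Sylow p (Equiv.Perm α)) (n : ℕ) :
    derivedSeries P n = ⊥ ↔ j ≤ n :=
  (P.mulEquivIteratedWreathProduct p j α hα (Multiplicative (ZMod p))
    (by rw [Nat.card_congr Multiplicative.toAdd, Nat.card_zmod])).derivedSeries_eq_bot_iff.trans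
    (IteratedWreathProduct.derivedSeries_eq_bot_iff _ j n)

theorem derivedLength_of_prod_sylow_symmetric_general (p : ℕ) (hp : p.Prime) (k : ℕ)
    (a : ℕ → ℕ) (hak : a k ≠ 0)
    (P : ∀ j : ℕ, Sylow p (Equiv.Perm (Fin (p ^ j))))
    (D : Type*) [Group D]
    (hD : Nonempty (D ≃*
      ∀ j : Fin k, (Fin (a (j.1 + 1)) →
        (P (j.1 + 1) : Subgroup (Equiv.Perm (Fin (p ^ (j.1 + 1)))))))) :
    derivedLength D = k := by
  have := Fact.mk hp
  obtain ⟨e⟩ := hD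
  refine derivedLength_eq_of_derivedSeries_eq_bot_iff fun n => ?_
  simp only [e.derivedSeries_eq_bot_iff, derivedSeries_pi_eq_bot_iff,
    Sylow.derivedSeries_perm_eq_bot_iff (Nat.card_fin _)]
  refine ⟨fun h => ?_, fun h j _ => by omega⟩
  cases k with
  | zero => exact n.zero_le
  | succ k => exact h (Fin.last k) ⟨0, Nat.pos_of_ne_zero hak⟩

/-- If `D ≅ P₁^{a₁} × P₂^{a₂} × ⋯ × P_k^{a_k}`, where `P_j` is a Sylow `p`-subgroup of the
symmetric group on `p^j` letters, and `a_k ≥ 1`, then the derived length of `D` equals `k`. -/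
theorem derivedLength_of_prod_sylow_symmetric (p : ℕ) (hp : p.Prime) (k : ℕ) (hk : 1 ≤ k)
    (a : ℕ → ℕ) (hak : a k ≠ 0)
    (P : ∀ j : ℕ, Sylow p (Equiv.Perm (Fin (p ^ j))))
    (D : Type*) [Group D]
    (hD : Nonempty (D ≃*
      ∀ j : Fin k, (Fin (a (j.1 + 1)) →
        (P (j.1 + 1) : Subgroup (Equiv.Perm (Fin (p ^ (j.1 + 1)))))))) :
    derivedLength D = k :=
  derivedLength_of_prod_sylow_symmetric_general p hp k a hak P D hD
end

section
/- If a finite group G has a component K (a subnormal quasisimple subgroup), then the normal closure N of K in G is the product of the G-conjugates of K, and this product is a central product of components. -/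
/-- A subgroup `H ≤ G` is subnormal if there is a chain `H = c 0 ⊴ c 1 ⊴ ⋯ ⊴ c n = ⊤`. -/
def IsSubnormal {G : Type*} [Group G] (H : Subgroup G) : Prop :=
  ∃ (n : ℕ) (c : ℕ → Subgroup G), c 0 = H ∧ c n = ⊤ ∧
    ∀ i < n, c i ≤ c (i + 1) ∧ ((c i).subgroupOf (c (i + 1))).Normal

/-- A subgroup is quasisimple if it is perfect, nontrivial, and simple modulo its center. -/
def IsQuasisimple {G : Type*} [Group G] (H : Subgroup G) : Prop :=
  H ≠ ⊥ ∧ ⁅H, H⁆ = H ∧ IsSimpleGroup (↥H ⧸ Subgroup.center ↥H)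

/-- A component of `G` is a subnormal quasisimple subgroup. -/
def IsComponent {G : Type*} [Group G] (H : Subgroup G) : Prop :=
  IsSubnormal H ∧ IsQuasisimple H

/-!
A component `K` lies in, or centralizes, every subnormal subgroup `N`. First let `N` be
normalized by the top of a subnormal series `K = c 0 ⊴ ⋯ ⊴ c n` containing it, and induct on
`n`. For `n = 0`, `N ⊴ K` maps to `1` or onto the simple group `K / Z(K)`: either `N` is central
in `K`, or `K = N Z(K)`, so `K / N` is abelian and `K = [K, K] ≤ N`. In the inductive step
either `K ≤ N ∩ c (n - 1)`, or `K` centralizes `N ∩ c (n - 1) ⊇ [K, N]`, and then the three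
subgroups lemma together with `K = [K, K]` gives `[K, N] = 1`. A general subnormal `N` is
reached by descending its own subnormal series. Hence two distinct components commute: if
`H ≤ K` while `K` centralizes `H`, the perfect group `H` would be abelian, hence trivial.
-/

theorem isSubnormal_iff_subgroup_isSubnormal {G : Type*} [Group G] (H : Subgroup G) :
    IsSubnormal H ↔ H.IsSubnormal := by
  refine ⟨fun ⟨n, c, hc0, hcn, hc⟩ => ?_, fun hH => ?_⟩
  · have hsub : ∀ k ≤ n, (c (n - k)).IsSubnormal := by
      intro k
      induction k with
      | zero => simp [hcn]
      | succ k ih =>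
        intro hk
        obtain ⟨hle, hnormal⟩ := hc (n - (k + 1)) (by omega)
        rw [show n - (k + 1) + 1 = n - k by omega] at hle hnormal
        exact .step _ _ hle (ih (by omega)) hnormal
    simpa [hc0] using hsub n le_rfl
  · obtain ⟨n, c, hmono, hnormal, hc0, hcn⟩ := hH.exists_chain
    exact ⟨n, c, hc0, hcn, fun i _ => ⟨hmono i.le_succ, hnormal i⟩⟩

open Subgroup

theorem Subgroup.Normal.le_center_or_eq_top {Q : Type*} [Group Q]
    [IsSimpleGroup (Q ⧸ center Q)] (hQ : ⁅(⊤ : Subgroup Q), (⊤ : Subgroup Q)⁆ = ⊤)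
    {N : Subgroup Q} (hN : N.Normal) : N ≤ center Q ∨ N = ⊤ := by
  rcases (hN.map _ (QuotientGroup.mk'_surjective (center Q))).eq_bot_or_eq_top with hbot | htop
  · left
    rwa [map_eq_bot_iff, QuotientGroup.ker_mk'] at hbot
  · right
    have hsup : N ⊔ center Q = ⊤ := by
      simpa [comap_map_eq] using congrArg (Subgroup.comap (QuotientGroup.mk' (center Q))) htop
    have hcenter : ⊤ ≤ (center Q).map (QuotientGroup.mk' N) := by
      rw [← map_top_of_surjective _ (QuotientGroup.mk'_surjective N), ← hsup, map_sup,
        QuotientGroup.map_mk'_self, bot_sup_eq]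
    rw [eq_top_iff, ← hQ, ← QuotientGroup.ker_mk' N, ← map_eq_bot_iff, eq_bot_iff]
    calc Subgroup.map (QuotientGroup.mk' N) ⁅(⊤ : Subgroup Q), (⊤ : Subgroup Q)⁆
        ≤ ⁅⊤, ⊤⁆ := by
          rw [map_commutator]; exact commutator_mono le_top le_top
      _ ≤ ⁅center Q, center Q⁆.map (QuotientGroup.mk' N) :=
          commutator_le_map_commutator hcenter hcenter
      _ = ⊥ := by rw [commutator_center_right, Subgroup.map_bot]

theorem Subgroup.commutator_eq_bot_of_perfect {G : Type*} [Group G] {K N : Subgroup G}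
    (hK : ⁅K, K⁆ = K) (h : ⁅⁅K, N⁆, K⁆ = ⊥) : ⁅K, N⁆ = ⊥ := by
  have h' : ⁅⁅N, K⁆, K⁆ = ⊥ := by rwa [commutator_comm N K]
  simpa [hK] using commutator_commutator_eq_bot_of_rotate h h'

section Quasisimple

variable {G : Type*} [Group G] {K N : Subgroup G}

theorem IsQuasisimple.le_or_commutator_eq_bot_of_le_normalizer (hK : IsQuasisimple K)
    (hNK : N ≤ K) (hKN : K ≤ normalizer N) : K ≤ N ∨ ⁅K, N⁆ = ⊥ := by
  obtain ⟨-, hperf, hsimple⟩ := hK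
  have hperf' : ⁅(⊤ : Subgroup K), (⊤ : Subgroup K)⁆ = ⊤ := by
    apply map_injective K.subtype_injective
    rw [map_commutator, ← MonoidHom.range_eq_map, range_subtype, hperf]
  rcases ((normal_subgroupOf_iff_le_normalizer hNK).mpr hKN).le_center_or_eq_top hperf'
    with hcenter | htop
  · right
    rw [commutator_eq_bot_iff_le_centralizer]
    intro k hk n hn
    have hn' : (⟨n, hNK hn⟩ : K) ∈ center K := hcenter (mem_subgroupOf.mpr hn)
    exact (congrArg Subtype.val (mem_center_iff.mp hn' ⟨k, hk⟩)).symm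
  · exact Or.inl (subgroupOf_eq_top.mp htop)

theorem IsQuasisimple.le_or_commutator_eq_bot_of_chain (hK : IsQuasisimple K)
    {c : ℕ → Subgroup G} (hmono : Monotone c)
    (hnormal : ∀ i, ((c i).subgroupOf (c (i + 1))).Normal) (hc0 : c 0 = K) (n : ℕ)
    (hN : N ≤ c n) (hnN : c n ≤ normalizer N) : K ≤ N ∨ ⁅K, N⁆ = ⊥ := by
  induction n generalizing N with
  | zero => subst hc0; exact hK.le_or_commutator_eq_bot_of_le_normalizer hN hnN
  | succ n ih =>
    have hle : c n ≤ c (n + 1) := hmono n.le_succ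
    have hnext : c (n + 1) ≤ normalizer (c n) :=
      (normal_subgroupOf_iff_le_normalizer hle).mp (hnormal n)
    rcases ih (N := N ⊓ c n) inf_le_right
      ((le_inf (hle.trans hnN) (c n).le_normalizer).trans inf_normalizer_le_normalizer_inf)
      with h | h
    · exact Or.inl (h.trans inf_le_left)
    · right
      have hKn : K ≤ c n := hc0 ▸ hmono (Nat.zero_le n)
      have hKN : ⁅K, N⁆ ≤ N ⊓ c n := le_inf
        (le_normalizer_iff_commutator_le_right.mp (hKn.trans (hle.trans hnN)))
        ((commutator_mono hKn hN).trans (le_normalizer_iff_commutator_le_left.mp hnext))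
      refine commutator_eq_bot_of_perfect hK.2.1 ?_
      rw [eq_bot_iff, ← h, commutator_comm K (N ⊓ c n)]
      exact commutator_mono hKN le_rfl

end Quasisimple

theorem Subgroup.map_equiv_center {A B : Type*} [Group A] [Group B] (e : A ≃* B) :
    (center A).map e.toMonoidHom = center B := by
  ext b
  rw [mem_map_equiv, ← SetLike.mem_coe, ← SetLike.mem_coe, coe_center, coe_center,
    ← MulEquivClass.apply_mem_center_iff e, MulEquiv.apply_symm_apply]

section Component

variable {G : Type*} [Group G] {H K N : Subgroup G}

theorem IsComponent.isSubnormal (hK : IsComponent K) : K.IsSubnormal :=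
  (isSubnormal_iff_subgroup_isSubnormal K).mp hK.1

theorem IsComponent.le_or_commutator_eq_bot (hK : IsComponent K) (hN : N.IsSubnormal) :
    K ≤ N ∨ ⁅K, N⁆ = ⊥ := by
  obtain ⟨n, c, hmono, hnormal, hc0, hcn⟩ := hK.isSubnormal.exists_chain
  induction hN with
  | top => exact Or.inl le_top
  | step N L hNL _ hNnormal ih =>
    rcases ih with hKL | hKL
    · refine hK.2.le_or_commutator_eq_bot_of_chain (c := fun i => c i ⊓ L)
        (fun i j hij => inf_le_inf_right L (hmono hij))
        (fun i => inf_subgroupOf_inf_normal_of_left L) (by simpa [hc0]) n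
        (by simpa [hcn]) ?_
      simpa [hcn] using (normal_subgroupOf_iff_le_normalizer hNL).mp hNnormal
    · exact Or.inr (eq_bot_iff.mpr (hKL ▸ commutator_mono le_rfl hNL))

theorem IsComponent.commutator_eq_bot_of_ne (hH : IsComponent H) (hK : IsComponent K)
    (hne : H ≠ K) : ⁅H, K⁆ = ⊥ := by
  rcases hH.le_or_commutator_eq_bot hK.isSubnormal with hHK | hHK
  · rcases hK.le_or_commutator_eq_bot hH.isSubnormal with hKH | hKH
    · exact absurd (le_antisymm hHK hKH) hne
    · refine absurd ?_ hH.2.1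
      rw [← hH.2.2.1, eq_bot_iff, ← hKH]
      exact commutator_mono hHK le_rfl
  · exact hHK

theorem IsQuasisimple.map_mulEquiv {G' : Type*} [Group G'] (hK : IsQuasisimple K)
    (e : G ≃* G') : IsQuasisimple (K.map e.toMonoidHom) := by
  obtain ⟨hbot, hperf, hsimple⟩ := hK
  refine ⟨?_, by rw [← map_commutator, hperf], ?_⟩
  · rwa [Ne, map_eq_bot_iff_of_injective _ e.injective]
  · let f := K.equivMapOfInjective e.toMonoidHom e.injective
    exact (QuotientGroup.congr _ _ f (map_equiv_center f)).symm.isSimpleGroup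

theorem IsComponent.map_mulEquiv {G' : Type*} [Group G'] (hK : IsComponent K) (e : G ≃* G') :
    IsComponent (K.map e.toMonoidHom) :=
  ⟨(isSubnormal_iff_subgroup_isSubnormal _).mpr
      (hK.isSubnormal.map (f := e.toMonoidHom) e.surjective),
    hK.2.map_mulEquiv e⟩

end Component

theorem Subgroup.normalClosure_eq_iSup_map_conj {G : Type*} [Group G] (K : Subgroup G) :
    normalClosure (K : Set G) = ⨆ g : G, K.map (MulAut.conj g).toMonoidHom := by
  have hconj (g h : G) : (K.map (MulAut.conj g).toMonoidHom).map (MulAut.conj h).toMonoidHom =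
      K.map (MulAut.conj (h * g)).toMonoidHom := by
    rw [map_map]; congr 1; ext x; simp [mul_assoc]
  have hnormal : (⨆ g : G, K.map (MulAut.conj g).toMonoidHom).Normal := by
    refine ⟨fun x hx h => ?_⟩
    have hmap : (⨆ g : G, K.map (MulAut.conj g).toMonoidHom).map (MulAut.conj h).toMonoidHom ≤
        ⨆ g : G, K.map (MulAut.conj g).toMonoidHom := by
      rw [map_iSup]
      exact iSup_le fun g => (hconj g h).le.trans (le_iSup_of_le (h * g) le_rfl)
    exact hmap ⟨x, hx, rfl⟩
  refine le_antisymm (normalClosure_le_normal fun x hx => ?_) (iSup_le fun g => ?_)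
  · exact le_iSup (fun g : G => K.map (MulAut.conj g).toMonoidHom) 1 ⟨x, hx, by simp⟩
  · rintro _ ⟨y, hy, rfl⟩
    exact normalClosure_normal.conj_mem y (subset_normalClosure hy) g

theorem normalClosure_component_general (G : Type*) [Group G] (K : Subgroup G)
    (hK : IsComponent K) :
    (Subgroup.normalClosure (K : Set G)
        = ⨆ g : G, K.map (MulAut.conj g).toMonoidHom) ∧
      (∀ g : G, IsComponent (K.map (MulAut.conj g).toMonoidHom)) ∧
      ∀ g h : G, K.map (MulAut.conj g).toMonoidHom ≠ K.map (MulAut.conj h).toMonoidHom →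
        ∀ x ∈ K.map (MulAut.conj g).toMonoidHom, ∀ y ∈ K.map (MulAut.conj h).toMonoidHom,
          Commute x y := by
  refine ⟨K.normalClosure_eq_iSup_map_conj, fun g => hK.map_mulEquiv _,
    fun g h hne x hx y hy => ?_⟩
  have hbot := (hK.map_mulEquiv (MulAut.conj g)).commutator_eq_bot_of_ne
    (hK.map_mulEquiv (MulAut.conj h)) hne
  rw [← commutatorElement_eq_one_iff_commute, ← mem_bot, ← hbot]
  exact commutator_mem_commutator hx hy

/-- If `K` is a component of the finite group `G`, then the normal closure of `K` in `G` is
the product of the `G`-conjugates of `K`, and this product is a central product of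
components: distinct conjugates are components commuting elementwise. -/
theorem normalClosure_component (G : Type*) [Group G] [Finite G] (K : Subgroup G)
    (hK : IsComponent K) :
    (Subgroup.normalClosure (K : Set G)
        = ⨆ g : G, K.map (MulAut.conj g).toMonoidHom) ∧
      (∀ g : G, IsComponent (K.map (MulAut.conj g).toMonoidHom)) ∧
      ∀ g h : G, K.map (MulAut.conj g).toMonoidHom ≠ K.map (MulAut.conj h).toMonoidHom →
        ∀ x ∈ K.map (MulAut.conj g).toMonoidHom, ∀ y ∈ K.map (MulAut.conj h).toMonoidHom,
          Commute x y :=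
  normalClosure_component_general G K hK
end

section
/- The Sylow p-subgroups of GL_n(q), where q is a power of the prime p, have nilpotency class exactly n−1 (for n ≥ 2). -/
/-!
Let `U_a ≤ GL_n(R)` be the group of unitriangular matrices `g` such that `g - 1` also vanishes on
the first `a` superdiagonals. Writing `g = 1 + A`, `h = 1 + B` one has
`⁅g, h⁆ - 1 = (A B - B A) g⁻¹ h⁻¹`, so `⁅U_a, U_b⁆ ≤ U_(a+b+1)`; since `U_(n-1) = 1`, the
unitriangular group `U_0` has class at most `n - 1`. Conversely the commutator of the elementary
matrices `1 + E_ij` and `1 + E_jk` is `1 + E_ik`, so `1 + E_1n ≠ 1` is an iterated commutator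
of the `n - 1` matrices `1 + E_(i,i+1)`. Over `F_q`, `q = p ^ f`, the group `U_0` has order `∏ q ^ i`, the full `p`-part of
`|GL_n(q)| = ∏ q ^ i (q ^ (n - i) - 1)`, so it is a Sylow `p`-subgroup, and all Sylow
`p`-subgroups are isomorphic to it.
-/

open Matrix

open scoped commutatorElement

namespace Units

variable {R : Type*} [Ring R]

def oneAddOfMulSelfEqZero (x : R) (hx : x * x = 0) : Rˣ where
  val := 1 + x
  inv := 1 - x
  val_inv := by rw [mul_sub, add_mul, add_mul, hx]; noncomm_ring
  inv_val := by rw [sub_mul, mul_add, mul_add, hx]; noncomm_ring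

@[simp]
lemma val_oneAddOfMulSelfEqZero (x : R) (hx : x * x = 0) :
    (oneAddOfMulSelfEqZero x hx : R) = 1 + x := rfl

lemma oneAddOfMulSelfEqZero_ne_one {x : R} (hx : x * x = 0) (hx0 : x ≠ 0) :
    oneAddOfMulSelfEqZero x hx ≠ 1 := fun h => hx0 (by simpa using congrArg Units.val h)

lemma commutatorElement_oneAddOfMulSelfEqZero {x y : R} (hx : x * x = 0) (hy : y * y = 0)
    (hyx : y * x = 0) :
    ⁅oneAddOfMulSelfEqZero x hx, oneAddOfMulSelfEqZero y hy⁆ =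
      oneAddOfMulSelfEqZero (x * y) (by rw [mul_assoc, ← mul_assoc y, hyx, zero_mul, mul_zero]) := by
  ext
  change (1 + x) * (1 + y) * (1 - x) * (1 - y) = 1 + x * y
  simp only [mul_add, add_mul, mul_sub, sub_mul, mul_one, one_mul, mul_assoc, hx, hy, hyx,
    mul_zero, zero_mul]
  abel

end Units

lemma Submonoid.inv_mem_of_finite {G : Type*} [Group G] [Finite G] (S : Submonoid G) {g : G}
    (hg : g ∈ S) : g⁻¹ ∈ S :=
  Submonoid.powers_le.mpr hg ((isOfFinOrder_of_finite g).mem_powers_iff_mem_zpowers.mpr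
    (inv_mem (Subgroup.mem_zpowers g)))

lemma Subgroup.nilpotencyClass_le_iff {G : Type*} [Group G] {S : Subgroup G}
    [Group.IsNilpotent S] {k : ℕ} : Group.nilpotencyClass S ≤ k ↔ S.lowerCentralSeries k = ⊥ := by
  rw [← lowerCentralSeries_eq_bot_iff_nilpotencyClass_le, ← map_subtype_inj, map_bot,
    top_subtype_lowerCentralSeries]

lemma Group.nilpotencyClass_congr {G H : Type*} [Group G] [Group H] (e : G ≃* H) :
    Group.nilpotencyClass G = Group.nilpotencyClass H := by
  by_cases hG : Group.IsNilpotent G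
  · have := nilpotent_of_mulEquiv e
    exact le_antisymm (nilpotencyClass_le_of_surjective e.symm.toMonoidHom e.symm.surjective)
      (nilpotencyClass_le_of_surjective e.toMonoidHom e.surjective)
  · rw [nilpotencyClass_of_not_nilpotent hG,
      nilpotencyClass_of_not_nilpotent (mt (isNilpotent_congr e).mpr hG)]

lemma Nat.Prime.not_dvd_pow_sub_one {p q m : ℕ} (hp : p.Prime) (hpq : p ∣ q) (hq : q ≠ 0)
    (hm : m ≠ 0) : ¬ p ∣ q ^ m - 1 := fun h => by
  have h1 : p ∣ q ^ m - (q ^ m - 1) := Nat.dvd_sub (dvd_pow hpq hm) h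
  rw [Nat.sub_sub_self (Nat.one_le_pow _ _ (Nat.pos_of_ne_zero hq))] at h1
  exact hp.one_lt.ne' (Nat.dvd_one.mp h1)

namespace Matrix

variable {n : ℕ} {R : Type*}

/-- `M` vanishes on and below its `a`-th superdiagonal; for `a = 0`, `M` is strictly upper
triangular. -/
def IsSupportedAbove [Zero R] (a : ℕ) (M : Matrix (Fin n) (Fin n) R) : Prop :=
  ∀ i j : Fin n, (j : ℕ) ≤ i + a → M i j = 0

namespace IsSupportedAbove

lemma mono [Zero R] {a b : ℕ} {M : Matrix (Fin n) (Fin n) R} (hM : IsSupportedAbove b M)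
    (hab : a ≤ b) : IsSupportedAbove a M :=
  fun i j hij => hM i j (hij.trans (by omega))

lemma zero [Zero R] (a : ℕ) : IsSupportedAbove a (0 : Matrix (Fin n) (Fin n) R) :=
  fun _ _ _ => rfl

lemma add [AddZeroClass R] {a : ℕ} {M N : Matrix (Fin n) (Fin n) R} (hM : IsSupportedAbove a M)
    (hN : IsSupportedAbove a N) : IsSupportedAbove a (M + N) :=
  fun i j hij => by rw [add_apply, hM i j hij, hN i j hij, add_zero]

lemma sub [AddGroup R] {a : ℕ} {M N : Matrix (Fin n) (Fin n) R} (hM : IsSupportedAbove a M)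
    (hN : IsSupportedAbove a N) : IsSupportedAbove a (M - N) :=
  fun i j hij => by rw [sub_apply, hM i j hij, hN i j hij, sub_zero]

lemma mul [NonUnitalNonAssocSemiring R] {a b : ℕ} {M N : Matrix (Fin n) (Fin n) R}
    (hM : IsSupportedAbove a M) (hN : IsSupportedAbove b N) :
    IsSupportedAbove (a + b + 1) (M * N) := by
  intro i j hij
  rw [mul_apply]
  refine Finset.sum_eq_zero fun l _ => ?_
  by_cases hl : (l : ℕ) ≤ i + a
  · rw [hM i l hl, zero_mul]
  · rw [hN l j (by omega), mul_zero]

lemma mul_of_sub_one [Ring R] {a : ℕ} {M N : Matrix (Fin n) (Fin n) R}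
    (hM : IsSupportedAbove a M) (hN : IsSupportedAbove 0 (N - 1)) :
    IsSupportedAbove a (M * N) := by
  have h := ((hM.mul hN).mono (by omega : a ≤ a + 0 + 1)).add hM
  rwa [mul_sub, mul_one, sub_add_cancel] at h

lemma det_one_add [CommRing R] {N : Matrix (Fin n) (Fin n) R} (hN : IsSupportedAbove 0 N) :
    (1 + N).det = 1 := by
  rw [det_of_isUpperTriangular fun i j hji => ?_]
  · exact Finset.prod_eq_one fun i _ => by simp [hN i i le_self_add]
  · have hji : j < i := hji
    rw [add_apply, one_apply_ne hji.ne', hN i j (Fin.le_def.mp hji.le), add_zero]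

end IsSupportedAbove

lemma isSupportedAbove_single [Zero R] {a : ℕ} {i j : Fin n} (hij : (i : ℕ) + a < j) (c : R) :
    IsSupportedAbove a (single i j c) := by
  intro i' j' hij'
  rw [single_apply_of_ne]
  rintro ⟨rfl, rfl⟩
  omega

lemma card_isSupportedAbove_zero [Zero R] :
    Nat.card {N : Matrix (Fin n) (Fin n) R // IsSupportedAbove 0 N} =
      ∏ j : Fin n, Nat.card R ^ (j : ℕ) := by
  classical
  let entries : {N : Matrix (Fin n) (Fin n) R // IsSupportedAbove 0 N} ≃
      ∀ i j : Fin n, {b : R // j ≤ i → b = 0} :=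
    { toFun N i j := ⟨N.1 i j, N.2 i j⟩
      invFun f := ⟨of fun i j => f i j, fun i j => (f i j).2⟩
      left_inv _ := rfl
      right_inv _ := rfl }
  have card_entry (i j : Fin n) :
      Nat.card {b : R // j ≤ i → b = 0} = if j ≤ i then 1 else Nat.card R := by
    split_ifs with h
    · simp [h]
    · exact Nat.card_congr (Equiv.subtypeUnivEquiv fun _ hji => absurd hji h)
  simp only [Nat.card_congr entries, Nat.card_pi, card_entry]
  rw [Finset.prod_comm]
  refine Finset.prod_congr rfl fun j _ => ?_
  rw [Finset.prod_ite, Finset.prod_const_one, one_mul, Finset.prod_const, ← Fin.card_Iio j]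
  congr 2
  ext i
  simp

end Matrix

section Filtration

variable (n : ℕ) (R : Type*) [CommRing R]

def unitriangularSubmonoid (a : ℕ) : Submonoid (GL (Fin n) R) where
  carrier := {g | IsSupportedAbove a ((g : Matrix (Fin n) (Fin n) R) - 1)}
  one_mem' := by simpa using IsSupportedAbove.zero a
  mul_mem' {g h} hg hh := by
    simpa [sub_mul] using (hg.mul_of_sub_one (hh.mono (Nat.zero_le a))).add hh

variable {n} in
def elementaryUnipotent {i j : Fin n} (hij : i ≠ j) : GL (Fin n) R :=
  Units.oneAddOfMulSelfEqZero (single i j 1) (single_mul_single_of_ne 1 i j i hij.symm 1)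

variable {n R}

lemma commutatorElement_elementaryUnipotent {i j k : Fin n} (hij : i ≠ j) (hjk : j ≠ k)
    (hik : i ≠ k) :
    ⁅elementaryUnipotent R hij, elementaryUnipotent R hjk⁆ = elementaryUnipotent R hik := by
  rw [elementaryUnipotent, elementaryUnipotent, Units.commutatorElement_oneAddOfMulSelfEqZero _ _
    (single_mul_single_of_ne 1 j k i hik.symm 1)]
  ext : 1
  simp [elementaryUnipotent]

lemma elementaryUnipotent_ne_one [Nontrivial R] {i j : Fin n} (hij : i ≠ j) :
    elementaryUnipotent R hij ≠ 1 :=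
  Units.oneAddOfMulSelfEqZero_ne_one _ fun h =>
    one_ne_zero (by simpa using congr_fun₂ h i j : (1 : R) = 0)

variable (n R) [Finite R]

def unitriangularFiltration (a : ℕ) : Subgroup (GL (Fin n) R) :=
  { unitriangularSubmonoid n R a with
    inv_mem' := (unitriangularSubmonoid n R a).inv_mem_of_finite }

abbrev unitriangularGroup : Subgroup (GL (Fin n) R) :=
  unitriangularFiltration n R 0

variable {n R}

lemma mem_unitriangularFiltration {a : ℕ} {g : GL (Fin n) R} :
    g ∈ unitriangularFiltration n R a ↔ IsSupportedAbove a ((g : Matrix (Fin n) (Fin n) R) - 1) :=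
  Iff.rfl

lemma unitriangularFiltration_antitone : Antitone (unitriangularFiltration n R) :=
  fun _ _ hab _ hg => IsSupportedAbove.mono hg hab

lemma unitriangularFiltration_eq_bot : unitriangularFiltration n R (n - 1) = ⊥ := by
  refine eq_bot_iff.mpr fun g hg => Subgroup.mem_bot.mpr (Units.ext ?_)
  rw [Units.val_one, ← sub_eq_zero]
  ext i j
  exact hg i j (by omega)

lemma commutatorElement_mem_unitriangularFiltration {a b : ℕ} {g h : GL (Fin n) R}
    (hg : g ∈ unitriangularFiltration n R a) (hh : h ∈ unitriangularFiltration n R b) :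
    ⁅g, h⁆ ∈ unitriangularFiltration n R (a + b + 1) := by
  have hinv : g⁻¹ * h⁻¹ ∈ unitriangularGroup n R :=
    mul_mem (unitriangularFiltration_antitone (Nat.zero_le a) (inv_mem hg))
      (unitriangularFiltration_antitone (Nat.zero_le b) (inv_mem hh))
  set A : Matrix (Fin n) (Fin n) R := ↑g
  set B : Matrix (Fin n) (Fin n) R := ↑h
  have hAB : IsSupportedAbove (a + b + 1) ((A - 1) * (B - 1) - (B - 1) * (A - 1)) :=
    (hg.mul hh).sub ((hh.mul hg).mono (by omega))
  have key : ((⁅g, h⁆ : GL (Fin n) R) : Matrix (Fin n) (Fin n) R) - 1 =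
      ((A - 1) * (B - 1) - (B - 1) * (A - 1)) *
        ((g⁻¹ * h⁻¹ : GL (Fin n) R) : Matrix (Fin n) (Fin n) R) := by
    have : (A - 1) * (B - 1) - (B - 1) * (A - 1) = A * B - B * A := by noncomm_ring
    rw [this, sub_mul]
    simp [A, B, commutatorElement_def, mul_assoc]
  rw [mem_unitriangularFiltration, key]
  exact hAB.mul_of_sub_one hinv

lemma elementaryUnipotent_mem {a : ℕ} {i j : Fin n} (hij : (i : ℕ) + a < j) :
    elementaryUnipotent R (Fin.ne_of_val_ne (by omega) : i ≠ j) ∈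
      unitriangularFiltration n R a := by
  rw [mem_unitriangularFiltration, elementaryUnipotent, Units.val_oneAddOfMulSelfEqZero,
    add_sub_cancel_left]
  exact isSupportedAbove_single hij 1

end Filtration

section LowerCentralSeries

variable {n : ℕ} {R : Type*} [CommRing R] [Finite R]

lemma lowerCentralSeries_unitriangularGroup_le (k : ℕ) :
    (unitriangularGroup n R).lowerCentralSeries k ≤ unitriangularFiltration n R k := by
  induction k with
  | zero => rfl
  | succ k ih =>
    rw [Subgroup.lowerCentralSeries_succ, Subgroup.commutator_le]
    exact fun g hg h hh => commutatorElement_mem_unitriangularFiltration (ih hg) hh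

lemma lowerCentralSeries_unitriangularGroup_eq_bot :
    (unitriangularGroup n R).lowerCentralSeries (n - 1) = ⊥ :=
  le_bot_iff.mp <|
    (lowerCentralSeries_unitriangularGroup_le _).trans unitriangularFiltration_eq_bot.le

instance isNilpotent_unitriangularGroup : Group.IsNilpotent (unitriangularGroup n R) :=
  Subgroup.isNilpotent_of_lowerCentralSeries_eq_bot lowerCentralSeries_unitriangularGroup_eq_bot

lemma elementaryUnipotent_mem_lowerCentralSeries (k : ℕ) {i j : Fin n} (hij : (i : ℕ) + k < j) :
    elementaryUnipotent R (Fin.ne_of_val_ne (by omega) : i ≠ j) ∈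
      (unitriangularGroup n R).lowerCentralSeries k := by
  induction k generalizing j with
  | zero => exact elementaryUnipotent_mem hij
  | succ k ih =>
    let m : Fin n := ⟨i + k + 1, by omega⟩
    rw [← commutatorElement_elementaryUnipotent (i := i) (j := m) (k := j)
      (Fin.ne_of_val_ne (by simp [m]; omega)) (Fin.ne_of_val_ne (by simp [m]; omega))]
    exact Subgroup.commutator_mem_commutator (ih (by simp [m]))
      (elementaryUnipotent_mem (by simp [m]; omega))

lemma nilpotencyClass_unitriangularGroup [Nontrivial R] :
    Group.nilpotencyClass (unitriangularGroup n R) = n - 1 := by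
  refine le_antisymm (Subgroup.nilpotencyClass_le_iff.mpr
    lowerCentralSeries_unitriangularGroup_eq_bot) (not_lt.mp fun hlt => ?_)
  have hbot := Subgroup.nilpotencyClass_le_iff.mp (Nat.le_sub_one_of_lt hlt)
  have hmem := elementaryUnipotent_mem_lowerCentralSeries (R := R) (n - 1 - 1)
    (n := n) (i := ⟨0, by omega⟩) (j := ⟨n - 1, by omega⟩) (by simp only; omega)
  rw [hbot, Subgroup.mem_bot] at hmem
  exact elementaryUnipotent_ne_one _ hmem

end LowerCentralSeries

section Sylow

variable {n : ℕ}

noncomputable def unitriangularGroupEquiv (R : Type*) [CommRing R] [Finite R] :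
    unitriangularGroup n R ≃ {N : Matrix (Fin n) (Fin n) R // IsSupportedAbove 0 N} where
  toFun g := ⟨((g : GL (Fin n) R) : Matrix (Fin n) (Fin n) R) - 1, g.2⟩
  invFun N := ⟨GeneralLinearGroup.mk'' (1 + N.1) (by rw [N.2.det_one_add]; exact isUnit_one),
    by simpa [mem_unitriangularFiltration] using N.2⟩
  left_inv g := by ext : 2; simp
  right_inv N := by ext : 1; simp

lemma card_unitriangularGroup (R : Type*) [CommRing R] [Finite R] :
    Nat.card (unitriangularGroup n R) = ∏ j : Fin n, Nat.card R ^ (j : ℕ) := by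
  rw [Nat.card_congr (unitriangularGroupEquiv R), card_isSupportedAbove_zero]

lemma isPGroup_unitriangularGroup {p f : ℕ} {R : Type*} [CommRing R] [Finite R]
    (hR : Nat.card R = p ^ f) : IsPGroup p (unitriangularGroup n R) :=
  IsPGroup.of_card (by
    rw [card_unitriangularGroup, hR]
    simp only [← pow_mul]
    exact Finset.prod_pow_eq_pow_sum _ _ _)

lemma card_GL_eq_card_unitriangularGroup_mul (F : Type*) [Field F] [Fintype F] :
    Nat.card (GL (Fin n) F) = Nat.card (unitriangularGroup n F) *
      ∏ i : Fin n, (Fintype.card F ^ (n - i) - 1) := by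
  rw [card_GL_field, card_unitriangularGroup, Nat.card_eq_fintype_card, ← Finset.prod_mul_distrib]
  refine Finset.prod_congr rfl fun i _ => ?_
  rw [Nat.mul_sub_one, ← pow_add, Nat.add_sub_cancel' i.isLt.le]

lemma not_dvd_index_unitriangularGroup {p f : ℕ} (hp : p.Prime) (hf : f ≠ 0) {F : Type*}
    [Field F] [Fintype F] (hF : Fintype.card F = p ^ f) :
    ¬ p ∣ (unitriangularGroup n F).index := by
  have hindex : (unitriangularGroup n F).index = ∏ i : Fin n, (Fintype.card F ^ (n - i) - 1) := by
    refine Nat.eq_of_mul_eq_mul_left (Nat.card_pos (α := unitriangularGroup n F)) ?_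
    rw [Subgroup.card_mul_index, card_GL_eq_card_unitriangularGroup_mul]
  rw [hindex, Prime.dvd_finsetProd_iff hp.prime]
  rintro ⟨i, -, hi⟩
  exact hp.not_dvd_pow_sub_one (hF ▸ dvd_pow_self p hf) Fintype.card_ne_zero (by omega) hi

end Sylow

theorem nilpotencyClass_sylow_GL_general (p f n : ℕ) (hp : p.Prime) (hf : 0 < f)
    (F : Type*) [Field F] [Fintype F] (hF : Fintype.card F = p ^ f)
    (P : Sylow p (GL (Fin n) F)) :
    Group.nilpotencyClass ↥(P : Subgroup (GL (Fin n) F)) = n - 1 := by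
  have : Fact p.Prime := ⟨hp⟩
  let U : Sylow p (GL (Fin n) F) :=
    (isPGroup_unitriangularGroup (Nat.card_eq_fintype_card.trans hF)).toSylow
      (not_dvd_index_unitriangularGroup hp hf.ne' hF)
  rw [Group.nilpotencyClass_congr (P.equiv U)]
  exact nilpotencyClass_unitriangularGroup

/-- The Sylow `p`-subgroups of `GL_n(q)`, where `q = p ^ f` is a power of the prime `p`,
have nilpotency class exactly `n - 1` (for `n ≥ 2`). -/
theorem nilpotencyClass_sylow_GL (p f n : ℕ) (hp : p.Prime) (hf : 0 < f) (hn : 2 ≤ n)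
    (F : Type*) [Field F] [Fintype F] (hF : Fintype.card F = p ^ f)
    (P : Sylow p (GL (Fin n) F))
    [Group.IsNilpotent ↥(P : Subgroup (GL (Fin n) F))] :
    Group.nilpotencyClass ↥(P : Subgroup (GL (Fin n) F)) = n - 1 :=
  nilpotencyClass_sylow_GL_general p f n hp hf F hF P
end
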